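/- Let S = K[x_1,x_2,x_3,x_4], P_1 = (x_1,x_2), P_2 = (x_2,x_3,x_4), P_3 = (x_1,x_3), and I = P_1 ∩ P_2 ∩ P_3. Then I = (x_1x_2,x_1x_3,x_1x_4,x_2x_3) and I = x_1x_2 K[x_1,x_2,x_3,x_4] ⊕ x_2x_3 K[x_2,x_3,x_4] ⊕ ((x_1) ∩ (x_3,x_4)) K[x_1,x_3,x_4] as a direct sum of K-vector spaces. -/

import Mathlib

open MvPolynomial

/-- The depth of a module `M` with respect to an ideal `I`: the supremum of
lengths of `M`-regular sequences with entries in `I`. -/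
noncomputable def moduleDepth (R : Type*) [CommRing R] (I : Ideal R)
    (M : Type*) [AddCommGroup M] [Module R M] : ℕ :=
  sSup {k | ∃ rs : List R, rs.length = k ∧ (∀ r ∈ rs, r ∈ I) ∧
    RingTheory.Sequence.IsRegular M rs}

/-- The Stanley space `u·K[Z]`: the `K`-span of all monomials `u·v` with
`v` a monomial in the variables of `Z`. -/
noncomputable def stanleySpace {n : ℕ} (K : Type*) [Field K] (d : Fin n →₀ ℕ)
    (Z : Finset (Fin n)) : Submodule K (MvPolynomial (Fin n) K) :=
  Submodule.span K {f | ∃ e : Fin n →₀ ℕ, (∀ i, e i ≠ 0 → i ∈ Z) ∧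
    f = monomial (d + e) (1 : K)}

/-- A Stanley decomposition of a monomial ideal `I`: a finite family of Stanley
spaces `uᵢ·K[Zᵢ]`, with each `uᵢ ∈ I`, which are independent and whose (direct)
sum is `I` as a `K`-vector space. -/
structure StanleyDecomp {n : ℕ} (K : Type*) [Field K]
    (I : Ideal (MvPolynomial (Fin n) K)) where
  m : ℕ
  u : Fin m → (Fin n →₀ ℕ)
  Z : Fin m → Finset (Fin n)
  mem : ∀ i, monomial (u i) (1 : K) ∈ I
  indep : iSupIndep fun i => stanleySpace K (u i) (Z i)
  total : (⨆ i, stanleySpace K (u i) (Z i)) = Submodule.restrictScalars K I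

/-- The Stanley depth of a monomial ideal: the largest `k` such that `I` admits a
Stanley decomposition all of whose Stanley spaces use at least `k` variables. -/
noncomputable def sdepth {n : ℕ} {K : Type*} [Field K]
    (I : Ideal (MvPolynomial (Fin n) K)) : ℕ :=
  sSup {k | ∃ D : StanleyDecomp K I, ∀ i, k ≤ (D.Z i).card}

/-- `I` is a monomial ideal if it is generated by monomials. -/
def IsMonomialIdeal {n : ℕ} {K : Type*} [Field K]
    (I : Ideal (MvPolynomial (Fin n) K)) : Prop :=
  ∃ G : Set (Fin n →₀ ℕ), I = Ideal.span ((fun d => monomial d (1 : K)) '' G)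

/-- The monomial prime ideal generated by the variables in `A`. -/
noncomputable def varIdeal {n : ℕ} (K : Type*) [Field K] (A : Finset (Fin n)) :
    Ideal (MvPolynomial (Fin n) K) :=
  Ideal.span ((fun i => (X i : MvPolynomial (Fin n) K)) '' ↑A)

/-- The graded maximal ideal `(x_1, …, x_n)`. -/
noncomputable def maxIdeal (n : ℕ) (K : Type*) [Field K] :
    Ideal (MvPolynomial (Fin n) K) :=
  varIdeal K Finset.univ

/-!
Each space in the statement is spanned by the monomials it contains, i.e. it is
`restrictSupport K A` for an explicit set `A` of exponent vectors, and for such spaces sums,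
intersections and independence are unions, intersections and disjointness of the index sets.
Everything thus reduces to propositional conditions on which of `e 0, …, e 3` vanish: the
exponents of `I` split according to whether `e 0` and `e 1` are both nonzero, `e 0 = 0`, or
`e 1 = 0`, and these three pieces are the exponent sets of the three Stanley spaces.
-/

open Function

namespace MvPolynomial

variable {σ R : Type*} [CommSemiring R]

lemma restrictSupport_empty : restrictSupport R (∅ : Set (σ →₀ ℕ)) = ⊥ := by
  ext p
  simp [mem_restrictSupport_iff]

lemma restrictSupport_union (s t : Set (σ →₀ ℕ)) :
    restrictSupport R (s ∪ t) = restrictSupport R s ⊔ restrictSupport R t := by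
  simp only [restrictSupport_eq_span, Set.image_union, Submodule.span_union]

lemma restrictSupport_inter (s t : Set (σ →₀ ℕ)) :
    restrictSupport R (s ∩ t) = restrictSupport R s ⊓ restrictSupport R t := by
  ext p
  simp [mem_restrictSupport_iff]

lemma disjoint_restrictSupport {s t : Set (σ →₀ ℕ)} (h : Disjoint s t) :
    Disjoint (restrictSupport R s) (restrictSupport R t) := by
  rw [disjoint_iff, ← restrictSupport_inter, h.inter_eq, restrictSupport_empty]

lemma iSupIndep_restrictSupport {ι : Type*} {s : ι → Set (σ →₀ ℕ)}
    (h : Pairwise (Disjoint on s)) : iSupIndep (restrictSupport R ∘ s) := by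
  intro i
  refine (disjoint_restrictSupport (s := s i) (t := ⋃ j ≠ i, s j) ?_).mono_right ?_
  · exact Set.disjoint_iUnion₂_right.2 fun _ hj => h hj.symm
  · exact iSup₂_le fun j hj =>
      restrictSupport_mono R (Set.subset_iUnion₂ (s := fun j (_ : j ≠ i) => s j) j hj)

lemma restrictScalars_span_monomial (G : Set (σ →₀ ℕ)) :
    (Ideal.span ((monomial · (1 : R)) '' G)).restrictScalars R =
      restrictSupport R {e | ∃ g ∈ G, g ≤ e} := by
  ext p
  simp [mem_ideal_span_monomial_image, mem_restrictSupport_iff, Set.subset_def]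

end MvPolynomial

lemma Finsupp.single_add_single_le_iff {σ : Type*} {i j : σ} (hij : i ≠ j) (e : σ →₀ ℕ) :
    single i 1 + single j 1 ≤ e ↔ e i ≠ 0 ∧ e j ≠ 0 := by
  classical
  constructor
  · intro h
    have hi := h i
    have hj := h j
    simp only [add_apply, single_apply, hij, hij.symm, if_true, if_false] at hi hj
    omega
  · rintro ⟨hi, hj⟩ k
    simp only [add_apply, single_apply]
    split_ifs <;> subst_vars <;> simp_all <;> omega

section

variable {n : ℕ} {K : Type*} [Field K]

lemma restrictScalars_varIdeal (A : Finset (Fin n)) :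
    (varIdeal K A).restrictScalars K = restrictSupport K {e | ∃ i ∈ A, e i ≠ 0} := by
  rw [varIdeal, show (fun i => (X i : MvPolynomial (Fin n) K)) '' ↑A =
      (monomial · 1) '' ((Finsupp.single · 1) '' ↑A) by rw [Set.image_image]; rfl,
    restrictScalars_span_monomial]
  simp [Finsupp.single_le_iff, Nat.one_le_iff_ne_zero]

lemma stanleySpace_eq_restrictSupport (d : Fin n →₀ ℕ) (Z : Finset (Fin n)) :
    stanleySpace K d Z = restrictSupport K {e | d ≤ e ∧ ∀ i ∉ Z, e i = d i} := by
  rw [stanleySpace, restrictSupport_eq_span]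
  congr 1
  ext f
  simp only [Set.mem_ofPred_eq, Set.mem_image]
  constructor
  · rintro ⟨e, he, rfl⟩
    exact ⟨d + e, ⟨le_self_add, fun i hi => by simp [not_imp_comm.1 (he i) hi]⟩, rfl⟩
  · rintro ⟨e, ⟨hde, hZ⟩, rfl⟩
    refine ⟨e - d, fun i hi => ?_, by rw [add_tsub_cancel_of_le hde]⟩
    by_contra hiZ
    simp [hZ i hiZ] at hi

lemma stanleySpace_single_add_single {i j : Fin n} {Z : Finset (Fin n)} (hij : i ≠ j)
    (hi : i ∈ Z) (hj : j ∈ Z) :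
    stanleySpace K (Finsupp.single i 1 + Finsupp.single j 1) Z =
      restrictSupport K {e | e i ≠ 0 ∧ e j ≠ 0 ∧ ∀ k ∉ Z, e k = 0} := by
  rw [stanleySpace_eq_restrictSupport]
  congr 1
  ext e
  simp only [Set.mem_ofPred_eq, Finsupp.single_add_single_le_iff hij, and_assoc]
  refine and_congr_right' (and_congr_right' (forall₂_congr fun k hk => ?_))
  rw [Finsupp.add_apply, Finsupp.single_eq_of_ne (ne_of_mem_of_not_mem hi hk).symm,
    Finsupp.single_eq_of_ne (ne_of_mem_of_not_mem hj hk).symm, add_zero]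

end

namespace ThreePrimes

variable {K : Type*} [Field K]

lemma restrictScalars_inf_eq :
    (varIdeal K ({0, 1} : Finset (Fin 4)) ⊓ varIdeal K {1, 2, 3} ⊓
        varIdeal K {0, 2}).restrictScalars K =
      restrictSupport K {e : Fin 4 →₀ ℕ |
        (e 0 ≠ 0 ∨ e 1 ≠ 0) ∧ (e 1 ≠ 0 ∨ e 2 ≠ 0 ∨ e 3 ≠ 0) ∧ (e 0 ≠ 0 ∨ e 2 ≠ 0)} := by
  simp only [Submodule.restrictScalars_inf, restrictScalars_varIdeal, ← restrictSupport_inter]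
  congr 1
  ext e
  simp [and_assoc]

lemma inf_eq_span_monomial :
    varIdeal K ({0, 1} : Finset (Fin 4)) ⊓ varIdeal K {1, 2, 3} ⊓ varIdeal K {0, 2} =
      Ideal.span {monomial (Finsupp.single 0 1 + Finsupp.single 1 1) 1,
        monomial (Finsupp.single 0 1 + Finsupp.single 2 1) 1,
        monomial (Finsupp.single 0 1 + Finsupp.single 3 1) 1,
        monomial (Finsupp.single 1 1 + Finsupp.single 2 1) (1 : K)} := by
  have hspan := restrictScalars_span_monomial (R := K) {Finsupp.single 0 1 + Finsupp.single 1 1,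
    Finsupp.single 0 1 + Finsupp.single 2 1, Finsupp.single 0 1 + Finsupp.single 3 1,
    Finsupp.single (1 : Fin 4) 1 + Finsupp.single 2 1}
  simp only [Set.image_insert_eq, Set.image_singleton] at hspan
  refine Submodule.restrictScalars_injective K _ _ ?_
  rw [restrictScalars_inf_eq, hspan]
  congr 1
  ext e
  simp [Finsupp.single_add_single_le_iff]
  tauto

lemma span_monomial_eq_restrictSupport :
    Submodule.span K {f | ∃ e : Fin 4 →₀ ℕ,
        (∀ i, e i ≠ 0 → i ∈ ({0, 2, 3} : Finset (Fin 4))) ∧ e 0 ≠ 0 ∧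
          (e 2 ≠ 0 ∨ e 3 ≠ 0) ∧ f = monomial e (1 : K)} =
      restrictSupport K {e : Fin 4 →₀ ℕ | e 1 = 0 ∧ e 0 ≠ 0 ∧ (e 2 ≠ 0 ∨ e 3 ≠ 0)} := by
  rw [restrictSupport_eq_span]
  congr 1
  ext f
  simp [Fin.forall_fin_succ, and_assoc, eq_comm]

end ThreePrimes

/-- for `P₁ = (x₁,x₂)`, `P₂ = (x₂,x₃,x₄)`, `P₃ = (x₁,x₃)` in
`K[x₁,x₂,x₃,x₄]`, `I = P₁ ∩ P₂ ∩ P₃ = (x₁x₂, x₁x₃, x₁x₄, x₂x₃)`, and `I`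
decomposes as the direct sum of `K`-vector spaces
`x₁x₂ K[x₁,x₂,x₃,x₄] ⊕ x₂x₃ K[x₂,x₃,x₄] ⊕ ((x₁) ∩ (x₃,x₄)) K[x₁,x₃,x₄]`. -/
theorem example_three_primes_decomposition {K : Type*} [Field K] :
    letI s : Fin 4 → (Fin 4 →₀ ℕ) := fun i => Finsupp.single i 1
    letI I : Ideal (MvPolynomial (Fin 4) K) :=
      varIdeal K {0, 1} ⊓ varIdeal K {1, 2, 3} ⊓ varIdeal K {0, 2}
    letI J1 : Submodule K (MvPolynomial (Fin 4) K) :=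
      stanleySpace K (s 0 + s 1) Finset.univ
    letI J2 : Submodule K (MvPolynomial (Fin 4) K) :=
      stanleySpace K (s 1 + s 2) {1, 2, 3}
    letI J3 : Submodule K (MvPolynomial (Fin 4) K) :=
      Submodule.span K {f | ∃ e : Fin 4 →₀ ℕ,
        (∀ i, e i ≠ 0 → i ∈ ({0, 2, 3} : Finset (Fin 4))) ∧ e 0 ≠ 0 ∧
          (e 2 ≠ 0 ∨ e 3 ≠ 0) ∧ f = monomial e (1 : K)}
    I = Ideal.span {monomial (s 0 + s 1) 1, monomial (s 0 + s 2) 1,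
        monomial (s 0 + s 3) 1, monomial (s 1 + s 2) 1} ∧
      iSupIndep (![J1, J2, J3] : Fin 3 → Submodule K (MvPolynomial (Fin 4) K)) ∧
      J1 ⊔ J2 ⊔ J3 = Submodule.restrictScalars K I := by
  beta_reduce
  have hJ1 : stanleySpace K (Finsupp.single 0 1 + Finsupp.single 1 1) Finset.univ =
      restrictSupport K {e : Fin 4 →₀ ℕ | e 0 ≠ 0 ∧ e 1 ≠ 0} := by
    rw [stanleySpace_single_add_single (by decide) (by decide) (by decide)]
    simp
  have hJ2 : stanleySpace K (Finsupp.single 1 1 + Finsupp.single 2 1) {1, 2, 3} =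
      restrictSupport K {e : Fin 4 →₀ ℕ | e 1 ≠ 0 ∧ e 2 ≠ 0 ∧ e 0 = 0} := by
    rw [stanleySpace_single_add_single (by decide) (by decide) (by decide)]
    simp [Fin.forall_fin_succ]
  rw [hJ1, hJ2, ThreePrimes.span_monomial_eq_restrictSupport]
  refine ⟨ThreePrimes.inf_eq_span_monomial, ?_, ?_⟩
  · convert iSupIndep_restrictSupport (R := K) (s := (![{e | e 0 ≠ 0 ∧ e 1 ≠ 0},
        {e | e 1 ≠ 0 ∧ e 2 ≠ 0 ∧ e 0 = 0}, {e | e 1 = 0 ∧ e 0 ≠ 0 ∧ (e 2 ≠ 0 ∨ e 3 ≠ 0)}] :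
          Fin 3 → Set (Fin 4 →₀ ℕ))) ?_ using 1
    · funext i
      fin_cases i <;> rfl
    · intro i j hij
      fin_cases i <;> fin_cases j <;> simp_all [Set.disjoint_left]
  · rw [← restrictSupport_union, ← restrictSupport_union, ThreePrimes.restrictScalars_inf_eq]
    congr 1
    ext e
    simp only [Set.mem_union, Set.mem_ofPred_eq]
    tauto
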